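/- Let U : ℝ^d → ℝ be continuous, convex, and coercive, let (ε_n)_{n ∈ ℕ} be a sequence of positive reals with ε_n → 0, and suppose the Gibbs measures μ_{ε_n} converge weakly to a probability measure μ on ℝ^d. Then μ is concentrated on the set of global minimizers of U: μ(U_*) = 1, where U_* = {x : U(x) = inf_{y} U(y)}. -/

import Mathlib

/-!
Laplace's principle. Fix levels `a < b` above `min U`. Against the reference weight
`exp(-U/ε₀²)`, the density `exp(-U/ε²)` on `{U > b}` is at most `exp(b/ε₀² - b/ε²)`, while the
partition function is at least `exp(-a/ε²) · vol {U < a}`, so `μ_ε {U > b} ≤ C exp(-(b - a)/ε²)`.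
The set `{U > b}` is open, so by the portmanteau theorem the weak limit gives it no mass;
letting `b ↓ min U` shows that `μ` lives on `{U ≤ min U}`. Coercivity provides the minimizer,
and the finiteness of some `Z_{ε₀}` comes from the weak convergence itself: the total masses
`μ_{εₙ}(ℝᵈ)` tend to `1`, whereas `Z_ε = ∞` would make `μ_ε = 0`.
-/

open MeasureTheory Filter

/-- The Gibbs measure `μ_ε` on `ℝ^d` with density
`x ↦ Z_ε⁻¹ exp(−U(x)/ε²)` with respect to Lebesgue measure. -/
noncomputable def gibbs (d : ℕ) (U : EuclideanSpace ℝ (Fin d) → ℝ) (ε : ℝ) :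
    Measure (EuclideanSpace ℝ (Fin d)) :=
  (∫⁻ x, ENNReal.ofReal (Real.exp (-U x / ε ^ 2)))⁻¹ •
    MeasureTheory.volume.withDensity (fun x => ENNReal.ofReal (Real.exp (-U x / ε ^ 2)))

open scoped ENNReal Topology BoundedContinuousFunction

lemma ae_le_of_forall_gt_ae_le {α β : Type*} [MeasurableSpace α] {μ : Measure α}
    [LinearOrder β] [TopologicalSpace β] [OrderTopology β] [DenselyOrdered β] [NoMaxOrder β]
    [FirstCountableTopology β] {f : α → β} {a : β} (h : ∀ b, a < b → ∀ᵐ x ∂μ, f x ≤ b) :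
    ∀ᵐ x ∂μ, f x ≤ a := by
  obtain ⟨u, -, hau, hu⟩ := exists_seq_strictAnti_tendsto a
  filter_upwards [ae_all_iff.2 fun n => h (u n) (hau n)] with x hx
  exact ge_of_tendsto' hu hx

lemma measure_eq_zero_of_isOpen_of_tendsto_zero {Ω ι : Type*} [MeasurableSpace Ω]
    [TopologicalSpace Ω] [OpensMeasurableSpace Ω] [HasOuterApproxClosed Ω]
    {L : Filter ι} [L.NeBot] {μs : ι → Measure Ω} {μ : Measure Ω} [IsProbabilityMeasure μ]
    (hμs : ∀ᶠ i in L, IsProbabilityMeasure (μs i))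
    (hlim : ∀ f : Ω →ᵇ ℝ, Tendsto (fun i => ∫ x, f x ∂μs i) L (𝓝 (∫ x, f x ∂μ)))
    {G : Set Ω} (hG : IsOpen G) (hG0 : Tendsto (fun i => μs i G) L (𝓝 0)) :
    μ G = 0 := by
  classical
  -- `ProbabilityMeasure` needs every term to be one; the others are replaced by `μ`.
  let ν : ι → ProbabilityMeasure Ω := fun i =>
    if h : IsProbabilityMeasure (μs i) then ⟨μs i, h⟩ else ⟨μ, inferInstance⟩
  have hν : ∀ᶠ i in L, (ν i : Measure Ω) = μs i :=
    hμs.mono fun i h => by simp [ν, h]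
  have hνlim : Tendsto ν L (𝓝 ⟨μ, inferInstance⟩) :=
    ProbabilityMeasure.tendsto_iff_forall_integral_tendsto.2 fun f =>
      (hlim f).congr' (hν.mono fun i h => by dsimp only; rw [h])
  have hle := ProbabilityMeasure.le_liminf_measure_open_of_tendsto hνlim hG
  rwa [(hG0.congr' (hν.mono fun i h => by rw [h])).liminf_eq, nonpos_iff_eq_zero] at hle

section Gibbs

variable {E : Type*} [MeasureSpace E]

noncomputable def gibbsDensity (U : E → ℝ) (ε : ℝ) (x : E) : ℝ≥0∞ :=
  ENNReal.ofReal (Real.exp (-U x / ε ^ 2))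

noncomputable def partitionFunction (U : E → ℝ) (ε : ℝ) : ℝ≥0∞ :=
  ∫⁻ x, gibbsDensity U ε x

variable {U : E → ℝ}

lemma measurable_gibbsDensity (hU : Measurable U) (ε : ℝ) : Measurable (gibbsDensity U ε) :=
  (hU.neg.div_const _).exp.ennreal_ofReal

lemma partitionFunction_ne_zero [NeZero (volume : Measure E)] (hU : Measurable U) (ε : ℝ) :
    partitionFunction U ε ≠ 0 := by
  refine ((lintegral_pos_iff_support (measurable_gibbsDensity hU ε)).2 ?_).ne'
  have hsupp : Function.support (gibbsDensity U ε) = Set.univ :=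
    Set.eq_univ_of_forall fun x => (ENNReal.ofReal_pos.2 (Real.exp_pos _)).ne'
  rw [hsupp]
  exact Measure.measure_univ_pos.2 (NeZero.ne _)

lemma setLIntegral_gibbsDensity_superlevel_le (hU : Measurable U) {b ε ε₀ : ℝ} (hε : 0 < ε)
    (hεε₀ : ε ≤ ε₀) :
    ∫⁻ x in {x | b < U x}, gibbsDensity U ε x ≤
      ENNReal.ofReal (Real.exp (b / ε₀ ^ 2 - b / ε ^ 2)) * partitionFunction U ε₀ := by
  calc ∫⁻ x in {x | b < U x}, gibbsDensity U ε x
      ≤ ∫⁻ x in {x | b < U x},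
          ENNReal.ofReal (Real.exp (b / ε₀ ^ 2 - b / ε ^ 2)) * gibbsDensity U ε₀ x := by
        refine setLIntegral_mono (measurable_const.mul (measurable_gibbsDensity hU ε₀))
          fun x (hx : b < U x) => ?_
        rw [gibbsDensity, gibbsDensity, ← ENNReal.ofReal_mul (Real.exp_pos _).le,
          ← Real.exp_add]
        gcongr ENNReal.ofReal (Real.exp ?_)
        have hdecay : (U x - b) / ε₀ ^ 2 ≤ (U x - b) / ε ^ 2 := by
          gcongr
        rw [sub_div, sub_div] at hdecay
        rw [neg_div, neg_div]
        linarith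
    _ ≤ ∫⁻ x, ENNReal.ofReal (Real.exp (b / ε₀ ^ 2 - b / ε ^ 2)) * gibbsDensity U ε₀ x :=
        setLIntegral_le_lintegral _ _
    _ = ENNReal.ofReal (Real.exp (b / ε₀ ^ 2 - b / ε ^ 2)) * partitionFunction U ε₀ :=
        lintegral_const_mul _ (measurable_gibbsDensity hU ε₀)

lemma ofReal_exp_mul_volume_sublevel_le_partitionFunction (hU : Measurable U) (a ε : ℝ) :
    ENNReal.ofReal (Real.exp (-a / ε ^ 2)) * volume {x | U x < a} ≤ partitionFunction U ε := by
  calc ENNReal.ofReal (Real.exp (-a / ε ^ 2)) * volume {x | U x < a}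
      = ∫⁻ _ in {x | U x < a}, ENNReal.ofReal (Real.exp (-a / ε ^ 2)) :=
        (setLIntegral_const _ _).symm
    _ ≤ ∫⁻ x in {x | U x < a}, gibbsDensity U ε x := by
        refine setLIntegral_mono (measurable_gibbsDensity hU ε) fun x (hx : U x < a) => ?_
        unfold gibbsDensity
        gcongr
    _ ≤ partitionFunction U ε := setLIntegral_le_lintegral _ _

end Gibbs

section GibbsMeasure

variable {d : ℕ} {U : EuclideanSpace ℝ (Fin d) → ℝ}

lemma gibbs_eq (ε : ℝ) :
    gibbs d U ε = (partitionFunction U ε)⁻¹ • volume.withDensity (gibbsDensity U ε) :=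
  rfl

lemma gibbs_apply (ε : ℝ) (s : Set (EuclideanSpace ℝ (Fin d))) :
    gibbs d U ε s = (partitionFunction U ε)⁻¹ * ∫⁻ x in s, gibbsDensity U ε x := by
  rw [gibbs_eq, Measure.smul_apply, withDensity_apply' _ s, smul_eq_mul]

lemma isProbabilityMeasure_gibbs_iff (hU : Measurable U) (ε : ℝ) :
    IsProbabilityMeasure (gibbs d U ε) ↔ partitionFunction U ε ≠ ⊤ := by
  have hZ := partitionFunction_ne_zero hU ε
  rw [isProbabilityMeasure_iff, gibbs_apply, Measure.restrict_univ]
  refine ⟨fun h hZtop => ?_, ENNReal.inv_mul_cancel hZ⟩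
  simp [hZtop] at h

lemma gibbs_superlevel_le (hU : Measurable U) {a b ε ε₀ : ℝ} (hε : 0 < ε) (hεε₀ : ε ≤ ε₀) :
    gibbs d U ε {x | b < U x} ≤ (volume {x | U x < a})⁻¹ * partitionFunction U ε₀ *
      ENNReal.ofReal (Real.exp (b / ε₀ ^ 2 - (b - a) / ε ^ 2)) := by
  have hZinv : (partitionFunction U ε)⁻¹ ≤
      ENNReal.ofReal (Real.exp (a / ε ^ 2)) * (volume {x | U x < a})⁻¹ := by
    calc (partitionFunction U ε)⁻¹
        ≤ (ENNReal.ofReal (Real.exp (-a / ε ^ 2)) * volume {x | U x < a})⁻¹ :=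
          ENNReal.inv_le_inv.2 (ofReal_exp_mul_volume_sublevel_le_partitionFunction hU a ε)
      _ = ENNReal.ofReal (Real.exp (a / ε ^ 2)) * (volume {x | U x < a})⁻¹ := by
          rw [ENNReal.mul_inv (.inl (by positivity)) (.inl ENNReal.ofReal_ne_top),
            ← ENNReal.ofReal_inv_of_pos (Real.exp_pos _), ← Real.exp_neg, neg_div, neg_neg]
  calc gibbs d U ε {x | b < U x}
      ≤ ENNReal.ofReal (Real.exp (a / ε ^ 2)) * (volume {x | U x < a})⁻¹ *
          (ENNReal.ofReal (Real.exp (b / ε₀ ^ 2 - b / ε ^ 2)) * partitionFunction U ε₀) := by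
        rw [gibbs_apply]
        exact mul_le_mul' hZinv (setLIntegral_gibbsDensity_superlevel_le hU hε hεε₀)
    _ = (volume {x | U x < a})⁻¹ * partitionFunction U ε₀ *
          ENNReal.ofReal (Real.exp (b / ε₀ ^ 2 - (b - a) / ε ^ 2)) := by
        have hexp : b / ε₀ ^ 2 - (b - a) / ε ^ 2 = a / ε ^ 2 + (b / ε₀ ^ 2 - b / ε ^ 2) := by
          ring
        rw [hexp, Real.exp_add, ENNReal.ofReal_mul (Real.exp_pos _).le]
        ring

lemma tendsto_gibbs_superlevel_zero (hU : Measurable U) {a b ε₀ : ℝ} (hab : a < b)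
    (hε₀ : 0 < ε₀) (hZ : partitionFunction U ε₀ ≠ ⊤) (hvol : volume {x | U x < a} ≠ 0)
    {ι : Type*} {L : Filter ι} {ε : ι → ℝ} (hε : Tendsto ε L (𝓝[>] 0)) :
    Tendsto (fun i => gibbs d U (ε i) {x | b < U x}) L (𝓝 0) := by
  have hexponent : Tendsto (fun i => b / ε₀ ^ 2 - (b - a) / ε i ^ 2) L atBot := by
    have hinv_sq : Tendsto (fun i => (ε i)⁻¹ ^ 2) L atTop :=
      (tendsto_pow_atTop two_ne_zero).comp (tendsto_inv_nhdsGT_zero.comp hε)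
    refine tendsto_atBot_add_const_left _ _ (tendsto_neg_atTop_atBot.comp ?_)
    simpa only [inv_pow, div_eq_mul_inv] using hinv_sq.const_mul_atTop (sub_pos.2 hab)
  have hbound : Tendsto (fun i => (volume {x | U x < a})⁻¹ * partitionFunction U ε₀ *
      ENNReal.ofReal (Real.exp (b / ε₀ ^ 2 - (b - a) / ε i ^ 2))) L (𝓝 0) := by
    have hexp := (ENNReal.continuous_ofReal.tendsto 0).comp
      (Real.tendsto_exp_atBot.comp hexponent)
    simpa using ENNReal.Tendsto.const_mul hexp
      (.inr (ENNReal.mul_ne_top (ENNReal.inv_ne_top.2 hvol) hZ))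
  refine tendsto_of_tendsto_of_tendsto_of_le_of_le' tendsto_const_nhds hbound
    (.of_forall fun _ => zero_le) ?_
  filter_upwards [hε (Ioo_mem_nhdsGT hε₀)] with i hi
  exact gibbs_superlevel_le hU hi.1 hi.2.le

end GibbsMeasure

theorem gibbs_weak_limit_concentrates_on_minimizers_general
    (d : ℕ) (U : EuclideanSpace ℝ (Fin d) → ℝ)
    (hUc : Continuous U)
    (hUcoer : Filter.Tendsto U (Bornology.cobounded (EuclideanSpace ℝ (Fin d))) Filter.atTop)
    (ε : ℕ → ℝ) (hεpos : ∀ n, 0 < ε n) (hε0 : Filter.Tendsto ε Filter.atTop (nhds 0))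
    (μ : Measure (EuclideanSpace ℝ (Fin d))) (hμ : IsProbabilityMeasure μ)
    (hweak : ∀ f : BoundedContinuousFunction (EuclideanSpace ℝ (Fin d)) ℝ,
      Filter.Tendsto (fun n => ∫ x, f x ∂(gibbs d U (ε n))) Filter.atTop
        (nhds (∫ x, f x ∂μ))) :
    μ {x : EuclideanSpace ℝ (Fin d) | ∀ y, U x ≤ U y} = 1 := by
  obtain ⟨x₀, hx₀⟩ : ∃ x₀, ∀ y, U x₀ ≤ U y :=
    hUc.exists_forall_le (by rwa [Metric.cobounded_eq_cocompact] at hUcoer)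
  have hprob : ∀ᶠ n in atTop, IsProbabilityMeasure (gibbs d U (ε n)) := by
    have hmass : Tendsto (fun n => (gibbs d U (ε n)).real Set.univ) atTop (𝓝 1) := by
      simpa using hweak 1
    filter_upwards [hmass.eventually_ne one_ne_zero] with n hn
    rw [isProbabilityMeasure_gibbs_iff hUc.measurable]
    intro hZ
    simp [gibbs_eq, hZ] at hn
  obtain ⟨n₀, hn₀⟩ := hprob.exists
  have hsuper : ∀ b, U x₀ < b → μ {x | b < U x} = 0 := fun b hb =>
    measure_eq_zero_of_isOpen_of_tendsto_zero hprob hweak (isOpen_lt continuous_const hUc)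
      (tendsto_gibbs_superlevel_zero hUc.measurable (add_div_two_lt_right.2 hb) (hεpos n₀)
        ((isProbabilityMeasure_gibbs_iff hUc.measurable _).1 hn₀)
        ((isOpen_lt hUc continuous_const).measure_ne_zero volume
          ⟨x₀, left_lt_add_div_two.2 hb⟩)
        (tendsto_nhdsWithin_iff.2 ⟨hε0, .of_forall hεpos⟩))
  have hmin : ∀ᵐ x ∂μ, U x ≤ U x₀ :=
    ae_le_of_forall_gt_ae_le fun b hb => by simpa [ae_iff] using hsuper b hb
  have hclosed : IsClosed {x | ∀ y, U x ≤ U y} := by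
    simp_rw [Set.ofPred_forall]
    exact isClosed_iInter fun y => isClosed_le hUc continuous_const
  rw [← mem_ae_iff_prob_eq_one hclosed.measurableSet]
  filter_upwards [hmin] with x hx y using hx.trans (hx₀ y)

/-- If `U : ℝ^d → ℝ` is continuous, convex and coercive, `εₙ → 0` with
`εₙ > 0`, and the Gibbs measures `μ_{εₙ}` converge weakly (i.e. integrals of
every bounded continuous function converge) to a probability measure `μ`, then
`μ` concentrates on the set `U_*` of global minimizers of `U`: `μ(U_*) = 1`. -/
theorem gibbs_weak_limit_concentrates_on_minimizers
    (d : ℕ) (U : EuclideanSpace ℝ (Fin d) → ℝ)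
    (hUc : Continuous U) (hUconv : ConvexOn ℝ Set.univ U)
    (hUcoer : Filter.Tendsto U (Bornology.cobounded (EuclideanSpace ℝ (Fin d))) Filter.atTop)
    (ε : ℕ → ℝ) (hεpos : ∀ n, 0 < ε n) (hε0 : Filter.Tendsto ε Filter.atTop (nhds 0))
    (μ : Measure (EuclideanSpace ℝ (Fin d))) (hμ : IsProbabilityMeasure μ)
    (hweak : ∀ f : BoundedContinuousFunction (EuclideanSpace ℝ (Fin d)) ℝ,
      Filter.Tendsto (fun n => ∫ x, f x ∂(gibbs d U (ε n))) Filter.atTop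
        (nhds (∫ x, f x ∂μ))) :
    μ {x : EuclideanSpace ℝ (Fin d) | ∀ y, U x ≤ U y} = 1 :=
  gibbs_weak_limit_concentrates_on_minimizers_general d U hUc hUcoer ε hεpos hε0 μ hμ hweak
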